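/- For every z₀ ∈ [0,1] there exists a constant C > 0 such that for every integer n ≥ 2, the expectation of the stopping time τ_n satisfies E[τ_n] ≤ C·log₂ n. -/

import Mathlib

open MeasureTheory ProbabilityTheory

/-- `P` is the infinite product of fair Bernoulli(1/2) measures on `ℕ → Bool`:
the coordinate maps are i.i.d. fair coin flips under `P`. -/
def IsFairCoinMeasure (P : Measure (ℕ → Bool)) : Prop :=
  IsProbabilityMeasure P ∧
  iIndepFun (fun i (ω : ℕ → Bool) => ω i) P ∧
  ∀ (i : ℕ) (b : Bool), P {ω | ω i = b} = 1/2

/-- The BEC polarization process with initial value `z₀`: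
`Z_0 = z₀`, and `Z_{i+1} = Z_i²` if `ω i = true`, `Z_{i+1} = 2·Z_i − Z_i²` otherwise. -/
def Zproc (z₀ : ℝ) : ℕ → (ℕ → Bool) → ℝ
  | 0, _ => z₀
  | (i+1), ω => if ω i then (Zproc z₀ i ω)^2 else 2 * Zproc z₀ i ω - (Zproc z₀ i ω)^2

/-- The stopping time `τ_n := min( inf{ i : min(Z_i, 1−Z_i) ≤ 2^(−6n/5) }, n )`
(the union with `{n}` implements the truncation at `n`, also when the set is empty). -/
noncomputable def tau (z₀ : ℝ) (n : ℕ) (ω : ℕ → Bool) : ℕ :=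
  sInf ({i | min (Zproc z₀ i ω) (1 - Zproc z₀ i ω) ≤ (2:ℝ) ^ (-(6 * (n:ℝ) / 5))} ∪ {n})

/-- The stopped value `Z_{τ_n}`. -/
noncomputable def Ztau (z₀ : ℝ) (n : ℕ) (ω : ℕ → Bool) : ℝ :=
  Zproc z₀ (tau z₀ n ω) ω

/-!
Write `L = log₂ (1 / y)` and use the potential `φ y = log₂ (1 + L)`. While `Y > 0`, one coin
outcome squares `Y`, doubling `L`; the other gives a `Y' ≤ min (1/2) (2Y)`, so that
`1 + log₂ (1 / Y') ≥ max 2 L`. Since `(10/9) (1 + L)² ≤ (1 + 2L) · max 2 L` for `L ≥ 0`,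
`φ (Y_{τ ∧ k}) - δ (τ ∧ k)` with `δ = log₂ (10/9) / 2` does not decrease on average over the
`k`-th coin. Before stopping `Y > 2^(-6n/5)`, so if `τ > 0` then `Y_τ ≥ Y_{τ-1}² > 2^(-12n/5)`
and `φ (Y_τ) - φ (Y_0) ≤ φ (Y_τ) ≤ log₂ (1 + 12n/5)`; if `τ = 0` the difference vanishes.
Hence `δ E[τ] ≤ E[φ (Y_τ) - φ (Y_0)] ≤ log₂ (1 + 12n/5) ≤ 3 log₂ n`.
As `τ ≤ n` depends only on the first `n` coins, all expectations are averages over `Bool^n`,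
and the average over coin `k` is computed by pairing each sequence with its flip at `k`.
-/

open Real

noncomputable def potential (y : ℝ) : ℝ := logb 2 (1 - logb 2 y)

lemma potential_nonneg {y : ℝ} (h0 : 0 ≤ y) (h1 : y ≤ 1) : 0 ≤ potential y :=
  logb_nonneg one_lt_two (by linarith [logb_nonpos one_lt_two h0 h1])

lemma potential_le_potential {a b : ℝ} (ha : 0 < a) (hab : a ≤ b) (hb : b ≤ 1) :
    potential b ≤ potential a := by
  have hlog := logb_le_logb_of_le one_lt_two ha hab
  exact logb_le_logb_of_le one_lt_two
    (by linarith [logb_nonpos one_lt_two (ha.le.trans hab) hb]) (by linarith)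

lemma potential_two_rpow_neg (x : ℝ) : potential (2 ^ (-x)) = logb 2 (1 + x) := by
  rw [potential, logb_rpow two_pos (by norm_num), sub_neg_eq_add]

lemma min_one_sub_le_half (z : ℝ) : min z (1 - z) ≤ 1 / 2 := by
  rcases le_total z (1 / 2) with h | h
  · exact (min_le_left _ _).trans h
  · exact (min_le_right _ _).trans (by linarith)

lemma ten_ninths_mul_sq_le {L M : ℝ} (hL : 0 ≤ L) (hM : 2 ≤ M) (hLM : L ≤ M) :
    10 / 9 * (1 + L) ^ 2 ≤ (1 + 2 * L) * M := by
  rcases le_total L 2 with h | h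
  · nlinarith [mul_nonneg (sub_nonneg.2 h) (by linarith : (0:ℝ) ≤ 5 * L + 2)]
  · nlinarith [mul_nonneg (sub_nonneg.2 h) (by linarith : (0:ℝ) ≤ 8 * L + 5)]

lemma potential_drift_of_le_half {z : ℝ} (hz : 0 < z) (hz' : z ≤ 1 / 2) :
    2 * potential z + logb 2 (10 / 9) ≤
      potential (z ^ 2) + potential (min (2 * z - z ^ 2) (1 - (2 * z - z ^ 2))) := by
  set w := min (2 * z - z ^ 2) (1 - (2 * z - z ^ 2))
  set L := -logb 2 z with hL_def
  set M := 1 - logb 2 w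
  have hw : 0 < w := lt_min (by nlinarith) (by nlinarith)
  have hL : 1 ≤ L := by
    have := (logb_le_iff_le_rpow one_lt_two hz (y := -1)).2 (by norm_num [hz'])
    linarith
  have hM : 2 ≤ M := by
    have := (logb_le_iff_le_rpow one_lt_two hw (y := -1)).2
      (by norm_num; exact min_one_sub_le_half _)
    linarith
  have hLM : L ≤ M := by
    have h2z := logb_le_logb_of_le one_lt_two hw
      ((min_le_left _ _).trans (by nlinarith) : w ≤ 2 * z)
    rw [logb_mul two_ne_zero hz.ne', logb_self_eq_one one_lt_two] at h2z
    linarith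
  have hpz : potential z = logb 2 (1 + L) := by rw [potential, sub_eq_add_neg]
  have hpz2 : potential (z ^ 2) = logb 2 (1 + 2 * L) := by
    rw [potential, logb_pow, hL_def]; push_cast; ring_nf
  calc 2 * potential z + logb 2 (10 / 9) = logb 2 (10 / 9 * (1 + L) ^ 2) := by
        rw [logb_mul (by norm_num) (by positivity), logb_pow, hpz]; ring
    _ ≤ logb 2 ((1 + 2 * L) * M) :=
        logb_le_logb_of_le one_lt_two (by positivity) (ten_ninths_mul_sq_le (by linarith) hM hLM)
    _ = potential (z ^ 2) + potential w := by
        rw [logb_mul (by positivity) (by positivity), hpz2]; rfl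

lemma potential_drift {z : ℝ} (hy : 0 < min z (1 - z)) :
    2 * potential (min z (1 - z)) + logb 2 (10 / 9) ≤
      potential (min (z ^ 2) (1 - z ^ 2)) +
        potential (min (2 * z - z ^ 2) (1 - (2 * z - z ^ 2))) := by
  rcases le_total z (1 - z) with h | h
  · rw [min_eq_left h] at hy ⊢
    rw [min_eq_left (by nlinarith : z ^ 2 ≤ 1 - z ^ 2)]
    exact potential_drift_of_le_half hy (by linarith)
  · rw [min_eq_right h] at hy ⊢
    have hdrift := potential_drift_of_le_half hy (by linarith)
    have e1 : min (2 * z - z ^ 2) (1 - (2 * z - z ^ 2)) = (1 - z) ^ 2 := by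
      rw [min_eq_right (by nlinarith)]; ring
    have e2 : min (z ^ 2) (1 - z ^ 2) =
        min (2 * (1 - z) - (1 - z) ^ 2) (1 - (2 * (1 - z) - (1 - z) ^ 2)) := by
      rw [min_comm]; congr 1 <;> ring
    rw [e1, e2]
    linarith

noncomputable def Yproc (z₀ : ℝ) (i : ℕ) (ω : ℕ → Bool) : ℝ :=
  min (Zproc z₀ i ω) (1 - Zproc z₀ i ω)

noncomputable def threshold (n : ℕ) : ℝ := (2:ℝ) ^ (-(6 * (n:ℝ) / 5))

lemma threshold_pos (n : ℕ) : 0 < threshold n := rpow_pos_of_pos two_pos _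

section

variable {z₀ : ℝ} {n i k : ℕ} {ω ω' : ℕ → Bool}

lemma Zproc_mem_Icc (hz : z₀ ∈ Set.Icc (0:ℝ) 1) (i : ℕ) (ω : ℕ → Bool) :
    Zproc z₀ i ω ∈ Set.Icc (0:ℝ) 1 := by
  induction i with
  | zero => exact hz
  | succ i ih =>
    obtain ⟨h0, h1⟩ := ih
    simp only [Zproc]
    split <;> constructor <;> nlinarith

lemma Zproc_congr (h : ∀ j < i, ω j = ω' j) : Zproc z₀ i ω = Zproc z₀ i ω' := by
  induction i with
  | zero => rfl
  | succ i ih =>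
    simp only [Zproc, ih fun j hj => h j (by omega), h i (by omega)]

lemma Yproc_congr (h : ∀ j < i, ω j = ω' j) : Yproc z₀ i ω = Yproc z₀ i ω' := by
  rw [Yproc, Yproc, Zproc_congr h]

lemma Yproc_nonneg (hz : z₀ ∈ Set.Icc (0:ℝ) 1) : 0 ≤ Yproc z₀ i ω := by
  obtain ⟨h0, h1⟩ := Zproc_mem_Icc hz i ω
  exact le_min h0 (by linarith)

lemma Yproc_le_half (z₀ : ℝ) (i : ℕ) (ω : ℕ → Bool) : Yproc z₀ i ω ≤ 1 / 2 :=
  min_one_sub_le_half _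

lemma sq_Yproc_le_Yproc_succ (hz : z₀ ∈ Set.Icc (0:ℝ) 1) :
    Yproc z₀ i ω ^ 2 ≤ Yproc z₀ (i + 1) ω := by
  obtain ⟨h0, h1⟩ := Zproc_mem_Icc hz i ω
  have hy0 : 0 ≤ Yproc z₀ i ω := Yproc_nonneg hz
  have hyz : Yproc z₀ i ω ≤ Zproc z₀ i ω := min_le_left _ _
  have hyz' : Yproc z₀ i ω ≤ 1 - Zproc z₀ i ω := min_le_right _ _
  have hprod := mul_le_mul hyz hyz' hy0 h0
  show _ ≤ min (Zproc z₀ (i + 1) ω) (1 - Zproc z₀ (i + 1) ω)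
  simp only [Zproc]
  split <;> apply le_min <;> nlinarith

lemma tau_le : tau z₀ n ω ≤ n := Nat.sInf_le (Or.inr rfl)

lemma tau_le_iff : tau z₀ n ω ≤ k ↔ ∃ i ≤ k, Yproc z₀ i ω ≤ threshold n ∨ i = n :=
  ⟨fun h => ⟨_, h, Nat.sInf_mem (s := {i | Yproc z₀ i ω ≤ threshold n} ∪ {n}) ⟨n, Or.inr rfl⟩⟩,
    fun ⟨_, hi, hmem⟩ => (Nat.sInf_le hmem).trans hi⟩

lemma tau_le_congr (h : ∀ j < k, ω j = ω' j) : tau z₀ n ω ≤ k ↔ tau z₀ n ω' ≤ k := by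
  simp only [tau_le_iff]
  exact exists_congr fun i => and_congr_right fun hi => by
    rw [Yproc_congr fun j hj => h j (by omega)]

lemma min_tau_succ_congr (h : ∀ j < k, ω j = ω' j) :
    min (tau z₀ n ω) (k + 1) = min (tau z₀ n ω') (k + 1) := by
  refine eq_of_forall_ge_iff fun c => ?_
  simp only [min_le_iff]
  rcases le_or_gt c k with hc | hc
  · rw [tau_le_congr fun j hj => h j (by omega)]
  · simp only [show k + 1 ≤ c by omega, or_true]

lemma tau_congr (h : ∀ j < n, ω j = ω' j) : tau z₀ n ω = tau z₀ n ω' := by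
  have := min_tau_succ_congr (z₀ := z₀) (n := n) h
  rwa [min_eq_left (tau_le.trans n.le_succ), min_eq_left (tau_le.trans n.le_succ)] at this

lemma threshold_lt_Yproc_of_lt_tau (h : i < tau z₀ n ω) : threshold n < Yproc z₀ i ω := by
  by_contra! hle
  have := tau_le_iff.2 ⟨i, le_rfl, Or.inl hle⟩
  omega

lemma threshold_sq_lt_Yproc_tau (hz : z₀ ∈ Set.Icc (0:ℝ) 1) (h : 0 < tau z₀ n ω) :
    threshold n ^ 2 < Yproc z₀ (tau z₀ n ω) ω := by
  obtain ⟨t, ht⟩ := Nat.exists_eq_add_one_of_ne_zero h.ne'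
  rw [ht]
  calc threshold n ^ 2 < Yproc z₀ t ω ^ 2 :=
        pow_lt_pow_left₀ (threshold_lt_Yproc_of_lt_tau (by omega)) (threshold_pos n).le two_ne_zero
    _ ≤ Yproc z₀ (t + 1) ω := sq_Yproc_le_Yproc_succ hz

lemma potential_Yproc_tau_sub_le (hz : z₀ ∈ Set.Icc (0:ℝ) 1) :
    potential (Yproc z₀ (tau z₀ n ω) ω) - potential (Yproc z₀ 0 ω) ≤
      logb 2 (1 + 12 * n / 5) := by
  rcases Nat.eq_zero_or_pos (tau z₀ n ω) with h | h
  · rw [h, sub_self]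
    exact logb_nonneg one_lt_two (by linarith [show (0:ℝ) ≤ 12 * n / 5 by positivity])
  · have hlt := threshold_sq_lt_Yproc_tau hz h
    have hτ : potential (Yproc z₀ (tau z₀ n ω) ω) ≤ potential (threshold n ^ 2) :=
      potential_le_potential (pow_pos (threshold_pos n) 2) hlt.le
        (by linarith [Yproc_le_half z₀ (tau z₀ n ω) ω])
    have hthr : potential (threshold n ^ 2) = logb 2 (1 + 12 * n / 5) := by
      rw [threshold, ← rpow_mul_natCast two_pos.le, ← potential_two_rpow_neg]
      ring_nf
    have h0 : 0 ≤ potential (Yproc z₀ 0 ω) :=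
      potential_nonneg (Yproc_nonneg hz) (by linarith [Yproc_le_half z₀ 0 ω])
    linarith

end

def flipAt {ι : Type*} [DecidableEq ι] (k : ι) (v : ι → Bool) : ι → Bool :=
  Function.update v k (!v k)

lemma flipAt_involutive {ι : Type*} [DecidableEq ι] (k : ι) :
    Function.Involutive (flipAt k) := by
  intro v
  simp [flipAt]

lemma sum_le_sum_of_add_flipAt_le {ι : Type*} [Fintype ι] [DecidableEq ι] (k : ι)
    {F G : (ι → Bool) → ℝ} (h : ∀ v, F v + F (flipAt k v) ≤ G v + G (flipAt k v)) :
    ∑ v, F v ≤ ∑ v, G v := by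
  have hpair (H : (ι → Bool) → ℝ) : ∑ v, (H v + H (flipAt k v)) = 2 * ∑ v, H v := by
    have hσ : ∑ v, H (flipAt k v) = ∑ v, H v := Equiv.sum_comp (flipAt_involutive k).toPerm H
    rw [Finset.sum_add_distrib, hσ]
    ring
  have := Finset.sum_le_sum fun v (_ : v ∈ Finset.univ) => h v
  rw [hpair F, hpair G] at this
  linarith

def extendFalse (n : ℕ) (v : Fin n → Bool) : ℕ → Bool :=
  fun i => if h : i < n then v ⟨i, h⟩ else false

lemma extendFalse_flipAt {n k : ℕ} (hk : k < n) (v : Fin n → Bool) :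
    extendFalse n (flipAt ⟨k, hk⟩ v) = flipAt k (extendFalse n v) := by
  funext i
  by_cases hi : i < n
  · rcases eq_or_ne i k with rfl | hik
    · simp [extendFalse, flipAt, hi]
    · simp [extendFalse, flipAt, hi, hik, Fin.ext_iff]
  · simp [extendFalse, flipAt, hi, show i ≠ k by omega]

lemma IsFairCoinMeasure.integral_comp_prefix {P : Measure (ℕ → Bool)} (hP : IsFairCoinMeasure P)
    (n : ℕ)
    (F : (Fin n → Bool) → ℝ) :
    ∫ ω, F (fun i => ω i) ∂P = ((2:ℝ) ^ n)⁻¹ * ∑ v, F v := by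
  obtain ⟨hprob, hindep, hfair⟩ := hP
  have hcoord (i : ℕ) : Measurable fun ω : ℕ → Bool => ω i := measurable_pi_apply i
  have hmap : P.map (fun ω (i : Fin n) => ω i) =
      Measure.pi (fun i : Fin n => P.map (fun ω => ω i)) :=
    (hindep.precomp Fin.val_injective).map_fun_eq_pi_map fun i => (hcoord i).aemeasurable
  have hcoin (i : Fin n) (b : Bool) : P.map (fun ω => ω i) {b} = 2⁻¹ := by
    rw [Measure.map_apply (hcoord i) (measurableSet_singleton b)]
    simpa [Set.preimage] using hfair i b
  calc ∫ ω, F (fun i => ω i) ∂P = ∫ v, F v ∂(P.map fun ω (i : Fin n) => ω i) :=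
        (integral_map (measurable_pi_lambda (fun (ω : ℕ → Bool) (i : Fin n) => ω i)
          fun i => hcoord i).aemeasurable (measurable_of_finite F).aestronglyMeasurable).symm
    _ = ((2:ℝ) ^ n)⁻¹ * ∑ v, F v := by
        rw [hmap, integral_fintype .of_finite, Finset.mul_sum]
        refine Finset.sum_congr rfl fun v _ => ?_
        simp [measureReal_def, hcoin]

noncomputable def compensatedPotential (z₀ : ℝ) (n k : ℕ) (ω : ℕ → Bool) : ℝ :=
  potential (Yproc z₀ (min (tau z₀ n ω) k) ω) - logb 2 (10 / 9) / 2 * min (tau z₀ n ω) k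

section

variable {z₀ : ℝ} {n k : ℕ} {ω : ℕ → Bool}

lemma potential_Yproc_succ_drift (hy : 0 < Yproc z₀ k ω) :
    2 * potential (Yproc z₀ k ω) + logb 2 (10 / 9) ≤
      potential (Yproc z₀ (k + 1) ω) + potential (Yproc z₀ (k + 1) (flipAt k ω)) := by
  have hZ : Zproc z₀ k (flipAt k ω) = Zproc z₀ k ω :=
    Zproc_congr fun j hj => Function.update_of_ne hj.ne _ _
  have hflip : flipAt k ω k = !ω k := Function.update_self _ _ _
  have hdrift := potential_drift hy
  simp only [Yproc, Zproc, hZ, hflip] at hdrift ⊢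
  cases ω k <;>
    simp only [Bool.not_false, Bool.not_true, if_true, if_false, Bool.false_eq_true] <;> linarith

lemma compensatedPotential_add_flipAt_le :
    compensatedPotential z₀ n k ω + compensatedPotential z₀ n k (flipAt k ω) ≤
      compensatedPotential z₀ n (k + 1) ω + compensatedPotential z₀ n (k + 1) (flipAt k ω) := by
  have hagree : ∀ j < k, ω j = flipAt k ω j :=
    fun j hj => (Function.update_of_ne hj.ne _ _).symm
  have hmin := min_tau_succ_congr (z₀ := z₀) (n := n) hagree
  rcases le_or_gt (tau z₀ n ω) k with h | h
  · have h' : tau z₀ n (flipAt k ω) = tau z₀ n ω := by omega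
    simp only [compensatedPotential, h', min_eq_left h, min_eq_left (Nat.le_succ_of_le h),
      le_refl]
  · have h' : k < tau z₀ n (flipAt k ω) := by omega
    have hdrift := potential_Yproc_succ_drift (z₀ := z₀)
      ((threshold_pos n).trans (threshold_lt_Yproc_of_lt_tau h))
    simp only [compensatedPotential, min_eq_right h.le, min_eq_right h'.le,
      min_eq_right (Nat.succ_le_of_lt h), min_eq_right (Nat.succ_le_of_lt h'),
      ← Yproc_congr hagree]
    push_cast
    linarith

end

lemma sum_compensatedPotential_le_succ (z₀ : ℝ) (n k : ℕ) :
    ∑ v : Fin n → Bool, compensatedPotential z₀ n k (extendFalse n v) ≤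
      ∑ v : Fin n → Bool, compensatedPotential z₀ n (k + 1) (extendFalse n v) := by
  rcases lt_or_ge k n with hk | hk
  · refine sum_le_sum_of_add_flipAt_le ⟨k, hk⟩ fun v => ?_
    rw [extendFalse_flipAt hk]
    exact compensatedPotential_add_flipAt_le
  · refine Finset.sum_le_sum fun v _ => le_of_eq ?_
    simp only [compensatedPotential, min_eq_left (tau_le.trans hk),
      min_eq_left (tau_le.trans (hk.trans k.le_succ))]

lemma sum_tau_le {z₀ : ℝ} (hz : z₀ ∈ Set.Icc (0:ℝ) 1) (n : ℕ) :
    logb 2 (10 / 9) / 2 * ∑ v : Fin n → Bool, (tau z₀ n (extendFalse n v) : ℝ) ≤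
      2 ^ n * logb 2 (1 + 12 * n / 5) := by
  have hmono := monotone_nat_of_le_succ (sum_compensatedPotential_le_succ z₀ n) (Nat.zero_le n)
  have hsplit (ω : ℕ → Bool) : logb 2 (10 / 9) / 2 * tau z₀ n ω =
      (potential (Yproc z₀ (tau z₀ n ω) ω) - potential (Yproc z₀ 0 ω)) -
        (compensatedPotential z₀ n n ω - compensatedPotential z₀ n 0 ω) := by
    simp only [compensatedPotential, min_eq_left tau_le, Nat.min_zero, Nat.cast_zero]
    ring
  have hbound : ∑ v : Fin n → Bool,
      (potential (Yproc z₀ (tau z₀ n (extendFalse n v)) (extendFalse n v)) -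
        potential (Yproc z₀ 0 (extendFalse n v))) ≤
      ∑ _v : Fin n → Bool, logb 2 (1 + 12 * n / 5) :=
    Finset.sum_le_sum fun v _ => potential_Yproc_tau_sub_le hz
  simp only [Finset.sum_const, Finset.card_univ, Fintype.card_pi, Fintype.card_bool,
    Finset.prod_const, Fintype.card_fin, nsmul_eq_mul, Finset.sum_sub_distrib] at hbound
  simp only [Finset.mul_sum, hsplit, Finset.sum_sub_distrib]
  push_cast at hbound
  linarith

lemma integral_tau_le {z₀ : ℝ} (hz : z₀ ∈ Set.Icc (0:ℝ) 1) {P : Measure (ℕ → Bool)}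
    (hP : IsFairCoinMeasure P) (n : ℕ) :
    ∫ ω, (tau z₀ n ω : ℝ) ∂P ≤ 2 / logb 2 (10 / 9) * logb 2 (1 + 12 * n / 5) := by
  have hc : 0 < logb 2 (10 / 9) := logb_pos one_lt_two (by norm_num)
  have hrestrict (ω : ℕ → Bool) :
      tau z₀ n ω = tau z₀ n (extendFalse n fun i => ω i) :=
    tau_congr fun j hj => by simp [extendFalse, hj]
  rw [integral_congr_ae (ae_of_all _ fun ω => congrArg Nat.cast (hrestrict ω)),
    hP.integral_comp_prefix n fun v => (tau z₀ n (extendFalse n v) : ℝ),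
    inv_mul_le_iff₀ (by positivity), div_mul_eq_mul_div, mul_div_assoc', le_div_iff₀ hc]
  linarith [sum_tau_le hz n]

lemma logb_one_add_twelve_fifths_le {n : ℕ} (hn : 2 ≤ n) :
    logb 2 (1 + 12 * n / 5) ≤ 3 * logb 2 n := by
  have hn' : (2:ℝ) ≤ n := by exact_mod_cast hn
  calc logb 2 (1 + 12 * n / 5) ≤ logb 2 ((n:ℝ) ^ 3) :=
        logb_le_logb_of_le one_lt_two (by positivity)
          (by nlinarith [mul_le_mul hn' hn' zero_le_two (by linarith)])
    _ = 3 * logb 2 n := by rw [logb_pow]; norm_num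

theorem stmt7 (z₀ : ℝ) (hz : z₀ ∈ Set.Icc (0:ℝ) 1)
    (P : Measure (ℕ → Bool)) (hP : IsFairCoinMeasure P) :
    ∃ C : ℝ, 0 < C ∧ ∀ n : ℕ, 2 ≤ n →
      (∫ ω, (tau z₀ n ω : ℝ) ∂P) ≤ C * Real.logb 2 n := by
  have hc : 0 < logb 2 (10 / 9) := logb_pos one_lt_two (by norm_num)
  refine ⟨6 / logb 2 (10 / 9), by positivity, fun n hn => ?_⟩
  calc ∫ ω, (tau z₀ n ω : ℝ) ∂P ≤ 2 / logb 2 (10 / 9) * logb 2 (1 + 12 * n / 5) :=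
        integral_tau_le hz hP n
    _ ≤ 2 / logb 2 (10 / 9) * (3 * logb 2 n) := by
        gcongr
        exact logb_one_add_twelve_fifths_le hn
    _ = 6 / logb 2 (10 / 9) * logb 2 n := by ring
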